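/- arXiv:1902.08928 — 3 statements merged into one kernel-verified Lean document; each statement's English description precedes it below -/
import Mathlib

section
/- Let σ, σ̄, ρ, γ, c be real numbers with σ ≠ 0, σ̄ ≠ 0, |ρ| ≤ 1, γ ≠ 0, c ≠ 0, and suppose D := (γ−1)(σ² + σ̄²) − 2ρσσ̄ ≠ 0 and σ² + σ̄² + 2ρσσ̄ ≠ 0. Define K₀ := [γ(σ² + σ̄²)² − 2γ²ρσσ̄(σ² + σ̄²) + 4γρσσ̄(σ² + σ̄² + ρσσ̄)]/D, K₁ := c(σ² + σ̄² + 2ρσσ̄)/D, and H := −c²/D. Then 4(K₁² + H·K₀) > 0 if and only if (γ−1)/γ² < 2ρσσ̄(σ² + σ̄²)/[(σ² + σ̄²)² + 4ρσσ̄(σ² + σ̄² + ρσσ̄)]. -/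
/-- The discriminant `Δ = 4(K₁² + H K₀)` of the Riccati equation of the optimal
investment problem is positive if and only if the solvability condition (35)
`(γ-1)/γ² < 2ρσσ̄(σ²+σ̄²)/[(σ²+σ̄²)² + 4ρσσ̄(σ²+σ̄²+ρσσ̄)]` holds. -/
theorem riccati_discriminant_pos_iff
    (σ σ' ρ γ c : ℝ) (hσ : σ ≠ 0) (hσ' : σ' ≠ 0) (hρ : |ρ| ≤ 1)
    (hγ : γ ≠ 0) (hc : c ≠ 0)
    (D : ℝ) (hD : D = (γ - 1) * (σ ^ 2 + σ' ^ 2) - 2 * ρ * σ * σ')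
    (hD0 : D ≠ 0)
    (hS2 : σ ^ 2 + σ' ^ 2 + 2 * ρ * σ * σ' ≠ 0)
    (K₀ K₁ H : ℝ)
    (hK₀ : K₀ = (γ * (σ ^ 2 + σ' ^ 2) ^ 2
        - 2 * γ ^ 2 * ρ * σ * σ' * (σ ^ 2 + σ' ^ 2)
        + 4 * γ * ρ * σ * σ' * (σ ^ 2 + σ' ^ 2 + ρ * σ * σ')) / D)
    (hK₁ : K₁ = c * (σ ^ 2 + σ' ^ 2 + 2 * ρ * σ * σ') / D)
    (hH : H = -c ^ 2 / D) :
    0 < 4 * (K₁ ^ 2 + H * K₀) ↔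
      (γ - 1) / γ ^ 2 <
        2 * ρ * σ * σ' * (σ ^ 2 + σ' ^ 2) /
          ((σ ^ 2 + σ' ^ 2) ^ 2
            + 4 * ρ * σ * σ' * (σ ^ 2 + σ' ^ 2 + ρ * σ * σ')) := by
  obtain ⟨hρ1, hρ2⟩ := abs_le.mp hρ
  set S : ℝ := σ ^ 2 + σ' ^ 2 with hS
  set p : ℝ := ρ * σ * σ' with hp
  -- S + 2p > 0
  have hSp_nonneg : 0 ≤ S + 2 * p := by
    nlinarith [mul_nonneg (by linarith : (0:ℝ) ≤ 1 + ρ) (sq_nonneg (σ + σ')),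
      mul_nonneg (by linarith : (0:ℝ) ≤ 1 - ρ) (sq_nonneg (σ - σ'))]
  have hSp : 0 < S + 2 * p := lt_of_le_of_ne hSp_nonneg (by
    intro h; exact hS2 (by linarith))
  have hden : S ^ 2 + 4 * p * (S + p) = (S + 2 * p) ^ 2 := by ring
  have hγ2 : (0:ℝ) < γ ^ 2 := by positivity
  have hE : (0:ℝ) < (S + 2 * p) ^ 2 := by positivity
  have hA : (0:ℝ) < 4 * c ^ 2 / D ^ 2 := by positivity
  have key : 4 * (K₁ ^ 2 + H * K₀)
      = 4 * c ^ 2 / D ^ 2 * ((1 - γ) * (S + 2 * p) ^ 2 + 2 * γ ^ 2 * p * S) := by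
    rw [hK₁, hH, hK₀]
    field_simp
    ring
  rw [key, show S ^ 2 + 4 * ρ * σ * σ' * (S + p) = (S + 2 * p) ^ 2 by rw [hp]; ring,
    show 2 * ρ * σ * σ' * S = 2 * p * S by rw [hp]; ring,
    div_lt_div_iff₀ hγ2 hE]
  constructor
  · intro h
    have h' : 0 < (1 - γ) * (S + 2 * p) ^ 2 + 2 * γ ^ 2 * p * S := by
      have h2 := mul_pos (inv_pos.mpr hA) h
      rwa [inv_mul_cancel_left₀ (ne_of_gt hA)] at h2

    nlinarith
  · intro h
    have h' : 0 < (1 - γ) * (S + 2 * p) ^ 2 + 2 * γ ^ 2 * p * S := by nlinarith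
    exact mul_pos hA h'
end

section
/- Let σ > 0, σ̄ > 0, −1 < ρ < 0, and γ > 0 be real numbers. Then the inequality (γ−1)/γ² < 2ρσσ̄(σ² + σ̄²)/[(σ² + σ̄²)² + 4ρσσ̄(σ² + σ̄² + ρσσ̄)] holds if and only if γ < 1 + 2ρσσ̄/(σ² + σ̄²). -/
/-- For negative correlation `-1 < ρ < 0` and `γ > 0`, the solvability
condition (35) holds if and only if `γ < 1 + 2ρσσ̄/(σ²+σ̄²)`. -/
theorem solvability_condition_iff_neg_corr
    (σ σ' ρ γ : ℝ) (hσ : 0 < σ) (hσ' : 0 < σ')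
    (hρ₁ : -1 < ρ) (hρ₂ : ρ < 0) (hγ : 0 < γ) :
    (γ - 1) / γ ^ 2 <
        2 * ρ * σ * σ' * (σ ^ 2 + σ' ^ 2) /
          ((σ ^ 2 + σ' ^ 2) ^ 2
            + 4 * ρ * σ * σ' * (σ ^ 2 + σ' ^ 2 + ρ * σ * σ')) ↔
      γ < 1 + 2 * ρ * σ * σ' / (σ ^ 2 + σ' ^ 2) := by
  set s : ℝ := σ ^ 2 + σ' ^ 2 with hs
  set t : ℝ := σ ^ 2 + σ' ^ 2 + 2 * ρ * σ * σ' with ht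
  have hs0 : 0 < s := by positivity
  have ht0 : 0 < t := by nlinarith [sq_nonneg (σ - σ'), mul_pos hσ hσ']
  have hts : t < s := by nlinarith [mul_pos hσ hσ']
  have hden : s ^ 2 + 4 * ρ * σ * σ' * (σ ^ 2 + σ' ^ 2 + ρ * σ * σ') = t ^ 2 := by
    rw [hs, ht]; ring
  have hnum : 2 * ρ * σ * σ' * (σ ^ 2 + σ' ^ 2) = (t - s) * s := by
    rw [hs, ht]; ring
  have hrhs : 1 + 2 * ρ * σ * σ' / (σ ^ 2 + σ' ^ 2) = t / s := by
    rw [hs, ht]; field_simp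
  rw [hden, hnum, hrhs, div_lt_div_iff₀ (by positivity) (by positivity),
    lt_div_iff₀ hs0]
  have hf2 : γ * (t - s) - t < 0 := by nlinarith
  constructor
  · intro h
    by_contra hc
    push_neg at hc
    nlinarith [mul_nonpos_of_nonneg_of_nonpos (sub_nonneg.2 hc) hf2.le]
  · intro h
    nlinarith [mul_pos (sub_pos.2 h) (neg_pos.2 hf2)]
end

section
/- Let σ > 0, σ̄ > 0, 0 < ρ < 1, and let γ be a real number with 0 < γ < 1 + 2ρσσ̄/(σ² + σ̄²). Then the inequality (γ−1)/γ² < 2ρσσ̄(σ² + σ̄²)/[(σ² + σ̄²)² + 4ρσσ̄(σ² + σ̄² + ρσσ̄)] holds. -/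
/-- For positive correlation `0 < ρ < 1` and `0 < γ < 1 + 2ρσσ̄/(σ²+σ̄²)`, the
solvability condition (35) holds. -/
theorem solvability_condition_pos_corr
    (σ σ' ρ γ : ℝ) (hσ : 0 < σ) (hσ' : 0 < σ')
    (hρ₁ : 0 < ρ) (hρ₂ : ρ < 1) (hγ₀ : 0 < γ)
    (hγ₁ : γ < 1 + 2 * ρ * σ * σ' / (σ ^ 2 + σ' ^ 2)) :
    (γ - 1) / γ ^ 2 <
      2 * ρ * σ * σ' * (σ ^ 2 + σ' ^ 2) /
        ((σ ^ 2 + σ' ^ 2) ^ 2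
          + 4 * ρ * σ * σ' * (σ ^ 2 + σ' ^ 2 + ρ * σ * σ')) := by
  set S : ℝ := σ ^ 2 + σ' ^ 2 with hSdef
  set b : ℝ := 2 * ρ * σ * σ' with hbdef
  have hS : 0 < S := by positivity
  have hb : 0 < b := by positivity
  have hbS : b < S := by
    nlinarith [sq_nonneg (σ - σ'), mul_pos hσ hσ', mul_pos (mul_pos hσ hσ') (sub_pos.mpr hρ₂)]
  -- denominator equals (S+b)^2
  have hden : S ^ 2 + 4 * ρ * σ * σ' * (S + ρ * σ * σ') = (S + b) ^ 2 := by
    rw [hbdef]; ring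
  rw [show 2 * ρ * σ * σ' * S = b * S by rw [hbdef], hden]
  -- hypothesis: γ * S < S + b
  have hγS : γ * S < S + b := by
    have h : (γ - 1) * S < b := (lt_div_iff₀ hS).mp (by linarith)
    linarith
  rw [div_lt_div_iff₀ (by positivity) (by positivity)]
  nlinarith [mul_pos (sub_pos.mpr hγS)
      (show 0 < γ * S + (S + b) - γ * (S + b) by nlinarith [mul_pos hγ₀ hb]),
    sq_nonneg γ, mul_pos hS hb]
end
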